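/- arXiv:1705.02698 — 4 statements merged into one kernel-verified Lean document; each statement's English description precedes it below -/
import Mathlib

section
/- For every f ∈ H, the approximate reconstruction satisfies the error estimate ‖f − G(U₁ f, A(P_n(U₁ f)))‖ ≤ ‖G‖ · ‖A‖ · ‖U₁‖ · infDist(f, W_n), where infDist(f, W_n) = inf_{g ∈ W_n} ‖f − g‖ and ‖G‖, ‖A‖, ‖U₁‖ denote operator norms. -/
/-!
Since `A ∘ U₁ = U₂` and `G` inverts the full-view data, the reconstruction error is
`G (0, A (U₁ f - P (U₁ f)))`, of norm at most `‖G‖ ‖A‖ ‖U₁ f - P (U₁ f)‖`. The projection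
residual is the distance from `U₁ f` to `V_n = U₁(W_n)`, and `U₁` is `‖U₁‖`-Lipschitz, so that
distance is at most `‖U₁‖ · infDist(f, W_n)`.
-/

open Metric

theorem LipschitzWith.infDist_image_le {α β : Type*} [PseudoMetricSpace α] [PseudoMetricSpace β]
    {K : NNReal} {g : α → β} (hg : LipschitzWith K g) (x : α) (s : Set α) :
    infDist (g x) (g '' s) ≤ K * infDist x s := by
  rcases s.eq_empty_or_nonempty with rfl | hs
  · simp
  have : Nonempty s := hs.to_subtype
  rw [infDist_eq_iInf (s := s), Real.mul_iInf_of_nonneg K.coe_nonneg]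
  refine le_ciInf fun y => ?_
  calc infDist (g x) (g '' s) ≤ dist (g x) (g y) := infDist_le_dist_of_mem ⟨y, y.2, rfl⟩
    _ ≤ K * dist x y := hg.dist_le_mul x y

theorem Submodule.norm_sub_eq_infDist_of_inner_eq_zero {F : Type*} [NormedAddCommGroup F]
    [InnerProductSpace ℝ F] (K : Submodule ℝ F) {u p : F} (hp : p ∈ K)
    (horth : ∀ w ∈ K, (inner ℝ (u - p) w : ℝ) = 0) :
    ‖u - p‖ = infDist u K := by
  rw [(K.norm_eq_iInf_iff_real_inner_eq_zero hp).2 horth, infDist_eq_iInf]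
  simp only [dist_eq_norm]

theorem norm_sub_reconstruction_le {𝕜 H Y₁ Y₂ : Type*} [NontriviallyNormedField 𝕜]
    (p : ENNReal) [Fact (1 ≤ p)]
    [SeminormedAddCommGroup H] [NormedSpace 𝕜 H]
    [SeminormedAddCommGroup Y₁] [NormedSpace 𝕜 Y₁]
    [SeminormedAddCommGroup Y₂] [NormedSpace 𝕜 Y₂]
    {U₁ : H →L[𝕜] Y₁} {U₂ : H →L[𝕜] Y₂} {A : Y₁ →L[𝕜] Y₂} (hA : ∀ g, A (U₁ g) = U₂ g)
    {G : WithLp p (Y₁ × Y₂) →L[𝕜] H} (hG : ∀ g, G ((WithLp.equiv p _).symm (U₁ g, U₂ g)) = g)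
    (f : H) (y : Y₁) :
    ‖f - G ((WithLp.equiv p _).symm (U₁ f, A y))‖ ≤ ‖G‖ * ‖A‖ * ‖U₁ f - y‖ := by
  simp only [WithLp.equiv_symm_apply] at hG ⊢
  have herror : f - G (WithLp.toLp p (U₁ f, A y)) = G (WithLp.toLp p (0, A (U₁ f - y))) :=
    calc f - G (WithLp.toLp p (U₁ f, A y))
        = G (WithLp.toLp p (U₁ f, U₂ f)) - G (WithLp.toLp p (U₁ f, A y)) := by rw [hG]
      _ = G (WithLp.toLp p (0, A (U₁ f - y))) := by
          rw [← map_sub, ← WithLp.toLp_sub, Prod.mk_sub_mk, sub_self, ← hA, map_sub A]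
  calc ‖f - G (WithLp.toLp p (U₁ f, A y))‖
      ≤ ‖G‖ * ‖A (U₁ f - y)‖ := by
        rw [herror, ← WithLp.norm_toLp_snd p Y₁ Y₂]
        exact G.le_opNorm _
    _ ≤ ‖G‖ * (‖A‖ * ‖U₁ f - y‖) := by gcongr; exact A.le_opNorm _
    _ = ‖G‖ * ‖A‖ * ‖U₁ f - y‖ := (mul_assoc _ _ _).symm

theorem learned_reconstruction_error_estimate_general
    {H Y₁ Y₂ : Type*}
    [NormedAddCommGroup H] [InnerProductSpace ℝ H]
    [NormedAddCommGroup Y₁] [InnerProductSpace ℝ Y₁]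
    [NormedAddCommGroup Y₂] [InnerProductSpace ℝ Y₂]
    (U₁ : H →L[ℝ] Y₁) (U₂ : H →L[ℝ] Y₂) (A : Y₁ →L[ℝ] Y₂)
    (hA : ∀ g : H, A (U₁ g) = U₂ g)
    (G : WithLp 2 (Y₁ × Y₂) →L[ℝ] H)
    (hG : ∀ g : H, G ((WithLp.equiv 2 (Y₁ × Y₂)).symm (U₁ g, U₂ g)) = g)
    (n : ℕ) (fi : Fin n → H)
    (Wn : Submodule ℝ H) (hW : Wn = Submodule.span ℝ (Set.range fi))
    (Vn : Submodule ℝ Y₁)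
    (hV : Vn = Submodule.span ℝ (Set.range fun i => U₁ (fi i)))
    (P : Y₁ →L[ℝ] Y₁)
    (hP : ∀ u : Y₁, P u ∈ Vn ∧ ∀ v ∈ Vn, (inner ℝ (u - P u) v : ℝ) = 0)
    (f : H) :
    ‖f - G ((WithLp.equiv 2 (Y₁ × Y₂)).symm (U₁ f, A (P (U₁ f))))‖ ≤
      ‖G‖ * ‖A‖ * ‖U₁‖ * Metric.infDist f (Wn : Set H) := by
  have hVW : Vn = Wn.map (U₁ : H →ₗ[ℝ] Y₁) := by
    rw [hV, hW, Submodule.map_span, ← Set.range_comp]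
    rfl
  have hresidual : ‖U₁ f - P (U₁ f)‖ ≤ ‖U₁‖ * infDist f Wn := by
    rw [Vn.norm_sub_eq_infDist_of_inner_eq_zero (hP _).1 (hP _).2, hVW,
      Submodule.map_coe]
    exact U₁.lipschitz.infDist_image_le f Wn
  calc ‖f - G ((WithLp.equiv 2 (Y₁ × Y₂)).symm (U₁ f, A (P (U₁ f))))‖
      ≤ ‖G‖ * ‖A‖ * ‖U₁ f - P (U₁ f)‖ := norm_sub_reconstruction_le 2 hA hG f _
    _ ≤ ‖G‖ * ‖A‖ * (‖U₁‖ * infDist f Wn) := by gcongr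
    _ = ‖G‖ * ‖A‖ * ‖U₁‖ * infDist f Wn := (mul_assoc _ _ _).symm

/-- Estimate (ere2) of Theorem 2: if `G` exactly inverts the full-view data
(`G (U₁ f, U₂ f) = f` on the ℓ²-product `Y = Y₁ ×₂ Y₂`), then the reconstruction
from the learned extension satisfies
`‖f − G(U₁ f, Â_n(U₁ f))‖ ≤ ‖G‖ ‖A‖ ‖U₁‖ infDist(f, W_n)`. -/
theorem learned_reconstruction_error_estimate
    {H Y₁ Y₂ : Type*}
    [NormedAddCommGroup H] [InnerProductSpace ℝ H] [CompleteSpace H]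
    [NormedAddCommGroup Y₁] [InnerProductSpace ℝ Y₁] [CompleteSpace Y₁]
    [NormedAddCommGroup Y₂] [InnerProductSpace ℝ Y₂] [CompleteSpace Y₂]
    (U₁ : H →L[ℝ] Y₁) (U₂ : H →L[ℝ] Y₂) (A : Y₁ →L[ℝ] Y₂)
    (hA : ∀ g : H, A (U₁ g) = U₂ g)
    (G : WithLp 2 (Y₁ × Y₂) →L[ℝ] H)
    (hG : ∀ g : H, G ((WithLp.equiv 2 (Y₁ × Y₂)).symm (U₁ g, U₂ g)) = g)
    (n : ℕ) (fi : Fin n → H)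
    (Wn : Submodule ℝ H) (hW : Wn = Submodule.span ℝ (Set.range fi))
    (Vn : Submodule ℝ Y₁)
    (hV : Vn = Submodule.span ℝ (Set.range fun i => U₁ (fi i)))
    (P : Y₁ →L[ℝ] Y₁)
    (hP : ∀ u : Y₁, P u ∈ Vn ∧ ∀ v ∈ Vn, (inner ℝ (u - P u) v : ℝ) = 0)
    (f : H) :
    ‖f - G ((WithLp.equiv 2 (Y₁ × Y₂)).symm (U₁ f, A (P (U₁ f))))‖ ≤
      ‖G‖ * ‖A‖ * ‖U₁‖ * Metric.infDist f (Wn : Set H) :=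
  learned_reconstruction_error_estimate_general U₁ U₂ A hA G hG n fi Wn hW Vn hV P hP f
end

section
/- If f ∈ W_n, then the approximate reconstruction is exact: G(U₁ f, A(P_n(U₁ f))) = f. -/
/-! On `W_n` the limited-view data `U₁ f` already lies in `V_n`, where the projection `P_n` is the
identity; so the learned extension returns `A (U₁ f) = U₂ f`, the exact full-view data, and `G`
inverts it. -/

open scoped InnerProductSpace

theorem Submodule.eq_of_mem_of_forall_inner_sub_eq_zero {𝕜 E : Type*} [RCLike 𝕜]
    [NormedAddCommGroup E] [InnerProductSpace 𝕜 E] {K : Submodule 𝕜 E} {u p : E}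
    (hu : u ∈ K) (hp : p ∈ K) (horth : ∀ v ∈ K, ⟪u - p, v⟫_𝕜 = 0) : p = u := by
  have hmem : u - p ∈ K ⊓ Kᗮ := ⟨K.sub_mem hu hp, (K.mem_orthogonal' _).2 horth⟩
  rw [K.inf_orthogonal_eq_bot, Submodule.mem_bot, sub_eq_zero] at hmem
  exact hmem.symm

theorem learned_reconstruction_exact_on_span_general
    {H Y₁ Y₂ : Type*}
    [NormedAddCommGroup H] [InnerProductSpace ℝ H]
    [NormedAddCommGroup Y₁] [InnerProductSpace ℝ Y₁]
    [NormedAddCommGroup Y₂] [InnerProductSpace ℝ Y₂]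
    (U₁ : H →L[ℝ] Y₁) (U₂ : H →L[ℝ] Y₂) (A : Y₁ →L[ℝ] Y₂)
    (hA : ∀ g : H, A (U₁ g) = U₂ g)
    (G : WithLp 2 (Y₁ × Y₂) →L[ℝ] H)
    (hG : ∀ g : H, G ((WithLp.equiv 2 (Y₁ × Y₂)).symm (U₁ g, U₂ g)) = g)
    (n : ℕ) (fi : Fin n → H)
    (Wn : Submodule ℝ H) (hW : Wn = Submodule.span ℝ (Set.range fi))
    (Vn : Submodule ℝ Y₁)
    (hV : Vn = Submodule.span ℝ (Set.range fun i => U₁ (fi i)))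
    (P : Y₁ →L[ℝ] Y₁)
    (hP : ∀ u : Y₁, P u ∈ Vn ∧ ∀ v ∈ Vn, (inner ℝ (u - P u) v : ℝ) = 0)
    (f : H) (hf : f ∈ Wn) :
    G ((WithLp.equiv 2 (Y₁ × Y₂)).symm (U₁ f, A (P (U₁ f)))) = f := by
  have hUf : U₁ f ∈ Vn := by
    subst hW hV
    rw [Set.range_comp' U₁ fi]
    exact Submodule.apply_mem_span_image_of_mem_span U₁.toLinearMap hf
  obtain ⟨hPmem, hPorth⟩ := hP (U₁ f)
  rw [Submodule.eq_of_mem_of_forall_inner_sub_eq_zero hUf hPmem hPorth, hA]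
  exact hG f

/-- Reconstruction part of Corollary 1: if `f ∈ W_n = span{f₁, …, f_n}`, then the
approximate reconstruction from the learned extension is exact:
`G (U₁ f, A (P_n (U₁ f))) = f`. -/
theorem learned_reconstruction_exact_on_span
    {H Y₁ Y₂ : Type*}
    [NormedAddCommGroup H] [InnerProductSpace ℝ H] [CompleteSpace H]
    [NormedAddCommGroup Y₁] [InnerProductSpace ℝ Y₁] [CompleteSpace Y₁]
    [NormedAddCommGroup Y₂] [InnerProductSpace ℝ Y₂] [CompleteSpace Y₂]
    (U₁ : H →L[ℝ] Y₁) (U₂ : H →L[ℝ] Y₂) (A : Y₁ →L[ℝ] Y₂)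
    (hA : ∀ g : H, A (U₁ g) = U₂ g)
    (G : WithLp 2 (Y₁ × Y₂) →L[ℝ] H)
    (hG : ∀ g : H, G ((WithLp.equiv 2 (Y₁ × Y₂)).symm (U₁ g, U₂ g)) = g)
    (n : ℕ) (fi : Fin n → H)
    (Wn : Submodule ℝ H) (hW : Wn = Submodule.span ℝ (Set.range fi))
    (Vn : Submodule ℝ Y₁)
    (hV : Vn = Submodule.span ℝ (Set.range fun i => U₁ (fi i)))
    (P : Y₁ →L[ℝ] Y₁)
    (hP : ∀ u : Y₁, P u ∈ Vn ∧ ∀ v ∈ Vn, (inner ℝ (u - P u) v : ℝ) = 0)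
    (f : H) (hf : f ∈ Wn) :
    G ((WithLp.equiv 2 (Y₁ × Y₂)).symm (U₁ f, A (P (U₁ f)))) = f :=
  learned_reconstruction_exact_on_span_general U₁ U₂ A hA G hG n fi Wn hW Vn hV P hP f hf
end

section
/- If the union ⋃_{n ≥ 1} W_n is dense in H (equivalently, the linear span of the sequence (f_i)_{i ∈ ℕ} is dense in H), then for every f ∈ H the approximate reconstructions converge to f: ‖f − G(U₁ f, A(P_n(U₁ f)))‖ → 0 as n → ∞. -/
/-! Since `G` inverts `U` exactly and `A ∘ U₁ = U₂`, the error is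
`f - f̂ₙ = G (0, A (U₁ f - Pₙ (U₁ f)))`, so `‖f - f̂ₙ‖ ≤ ‖G‖ ‖A‖ ‖U₁ f - Pₙ (U₁ f)‖`.
The projection error tends to zero because `Pₙ (U₁ f)` is the best approximation of `U₁ f` from the
increasing spaces `Vₙ ⊇ U₁ Wₙ`, and by continuity of `U₁` their union accumulates at `U₁ f`. -/

open Filter Topology Set

theorem norm_sub_le_norm_sub_of_forall_inner_eq_zero {F : Type*} [NormedAddCommGroup F]
    [InnerProductSpace ℝ F] {K : Submodule ℝ F} {u p v : F} (hp : p ∈ K)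
    (horth : ∀ w ∈ K, inner ℝ (u - p) w = 0) (hv : v ∈ K) : ‖u - p‖ ≤ ‖u - v‖ := by
  have hpyth : ‖u - v‖ * ‖u - v‖ = ‖u - p‖ * ‖u - p‖ + ‖p - v‖ * ‖p - v‖ := by
    rw [← norm_add_sq_eq_norm_sq_add_norm_sq_real (horth _ (K.sub_mem hp hv)), sub_add_sub_cancel]
  rw [mul_self_le_mul_self_iff (norm_nonneg _) (norm_nonneg _), hpyth]
  exact le_add_of_nonneg_right (mul_self_nonneg _)

theorem tendsto_norm_sub_zero_of_mem_closure_iUnion {E : Type*} [SeminormedAddCommGroup E]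
    {V : ℕ → Set E} (hV : Monotone V) {u : E} (hu : u ∈ closure (⋃ n, V n)) {p : ℕ → E}
    (hbest : ∀ n, ∀ v ∈ V n, ‖u - p n‖ ≤ ‖u - v‖) :
    Tendsto (fun n => ‖u - p n‖) atTop (𝓝 0) := by
  rw [Metric.tendsto_atTop]
  intro ε hε
  obtain ⟨v, hv, huv⟩ := Metric.mem_closure_iff.1 hu ε hε
  obtain ⟨m, hvm⟩ := mem_iUnion.1 hv
  refine ⟨m, fun n hn => ?_⟩
  rw [Real.dist_0_eq_abs, abs_norm]
  exact (hbest n v (hV hn hvm)).trans_lt (by rwa [← dist_eq_norm])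

theorem monotone_span_image_Iio {R M : Type*} [Semiring R] [AddCommMonoid M] [Module R M]
    (g : ℕ → M) : Monotone fun n => Submodule.span R (g '' Iio n) :=
  fun _ _ h => Submodule.span_mono (image_mono (Iio_subset_Iio h))

theorem norm_sub_apply_toLp_le {𝕜 H Y₁ Y₂ : Type*} [NontriviallyNormedField 𝕜] {p : ENNReal}
    [Fact (1 ≤ p)] [SeminormedAddCommGroup H] [NormedSpace 𝕜 H]
    [SeminormedAddCommGroup Y₁] [NormedSpace 𝕜 Y₁] [SeminormedAddCommGroup Y₂] [NormedSpace 𝕜 Y₂]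
    {U₁ : H →L[𝕜] Y₁} {U₂ : H →L[𝕜] Y₂} {G : WithLp p (Y₁ × Y₂) →L[𝕜] H}
    (hG : ∀ g : H, G ((WithLp.equiv p (Y₁ × Y₂)).symm (U₁ g, U₂ g)) = g) (f : H) (y : Y₂) :
    ‖f - G (WithLp.toLp p (U₁ f, y))‖ ≤ ‖G‖ * ‖U₂ f - y‖ := by
  have hGf : G (WithLp.toLp p (U₁ f, U₂ f)) = f := hG f
  have hdiff : f - G (WithLp.toLp p (U₁ f, y)) = G (WithLp.toLp p (0, U₂ f - y)) := by
    nth_rw 1 [← hGf]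
    rw [← map_sub, ← WithLp.toLp_sub, Prod.mk_sub_mk, sub_self]
  rw [hdiff, ← WithLp.norm_toLp_snd p Y₁ Y₂]
  exact G.le_opNorm _

theorem learned_reconstruction_convergence_general
    {H Y₁ Y₂ : Type*}
    [NormedAddCommGroup H] [InnerProductSpace ℝ H]
    [NormedAddCommGroup Y₁] [InnerProductSpace ℝ Y₁]
    [NormedAddCommGroup Y₂] [InnerProductSpace ℝ Y₂]
    (U₁ : H →L[ℝ] Y₁) (U₂ : H →L[ℝ] Y₂) (A : Y₁ →L[ℝ] Y₂)
    (hA : ∀ g : H, A (U₁ g) = U₂ g)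
    (G : WithLp 2 (Y₁ × Y₂) →L[ℝ] H)
    (hG : ∀ g : H, G ((WithLp.equiv 2 (Y₁ × Y₂)).symm (U₁ g, U₂ g)) = g)
    (fi : ℕ → H)
    (W : ℕ → Submodule ℝ H)
    (hW : ∀ n : ℕ, W n = Submodule.span ℝ (fi '' Set.Iio n))
    (V : ℕ → Submodule ℝ Y₁)
    (hV : ∀ n : ℕ, V n = Submodule.span ℝ ((fun g => U₁ g) '' (fi '' Set.Iio n)))
    (P : ℕ → Y₁ →L[ℝ] Y₁)
    (hP : ∀ n : ℕ, ∀ u : Y₁, P n u ∈ V n ∧ ∀ v ∈ V n, (inner ℝ (u - P n u) v : ℝ) = 0)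
    (hdense : Dense (⋃ n : ℕ, (W n : Set H)))
    (f : H) :
    Filter.Tendsto
      (fun n : ℕ =>
        ‖f - G ((WithLp.equiv 2 (Y₁ × Y₂)).symm (U₁ f, A (P n (U₁ f))))‖)
      Filter.atTop (nhds 0) := by
  have hV_mono : Monotone fun n => (V n : Set Y₁) := by
    simp only [hV, image_image]
    exact SetLike.coe_mono.comp (monotone_span_image_Iio _)
  have hU₁f : U₁ f ∈ closure (⋃ n, (V n : Set Y₁)) := by
    refine map_mem_closure U₁.continuous (hdense f) fun x hx => ?_
    obtain ⟨n, hxn⟩ := mem_iUnion.1 hx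
    rw [SetLike.mem_coe, hW n] at hxn
    exact mem_iUnion.2 ⟨n, hV n ▸ Submodule.apply_mem_span_image_of_mem_span (U₁ : H →ₗ[ℝ] Y₁) hxn⟩
  have hproj : Tendsto (fun n => ‖U₁ f - P n (U₁ f)‖) atTop (𝓝 0) :=
    tendsto_norm_sub_zero_of_mem_closure_iUnion hV_mono hU₁f fun n _ hv =>
      norm_sub_le_norm_sub_of_forall_inner_eq_zero (hP n _).1 (hP n _).2 hv
  refine squeeze_zero (fun _ => norm_nonneg _) (fun n => ?_)
    (by simpa using hproj.const_mul (‖G‖ * ‖A‖))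
  calc ‖f - G ((WithLp.equiv 2 (Y₁ × Y₂)).symm (U₁ f, A (P n (U₁ f))))‖
      ≤ ‖G‖ * ‖U₂ f - A (P n (U₁ f))‖ := norm_sub_apply_toLp_le hG f _
    _ = ‖G‖ * ‖A (U₁ f - P n (U₁ f))‖ := by rw [map_sub, hA]
    _ ≤ ‖G‖ * (‖A‖ * ‖U₁ f - P n (U₁ f)‖) := by gcongr; exact A.le_opNorm _
    _ = ‖G‖ * ‖A‖ * ‖U₁ f - P n (U₁ f)‖ := (mul_assoc _ _ _).symm

/-- Reconstruction part of Corollary 2: if `⋃_{n ≥ 1} W_n` is dense in `H`, where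
`W_n = span{f₁, …, f_n}`, then for every `f ∈ H` the approximate reconstructions
converge to `f`: `‖f − G (U₁ f, A (P_n (U₁ f)))‖ → 0` as `n → ∞`. -/
theorem learned_reconstruction_convergence
    {H Y₁ Y₂ : Type*}
    [NormedAddCommGroup H] [InnerProductSpace ℝ H] [CompleteSpace H]
    [NormedAddCommGroup Y₁] [InnerProductSpace ℝ Y₁] [CompleteSpace Y₁]
    [NormedAddCommGroup Y₂] [InnerProductSpace ℝ Y₂] [CompleteSpace Y₂]
    (U₁ : H →L[ℝ] Y₁) (U₂ : H →L[ℝ] Y₂) (A : Y₁ →L[ℝ] Y₂)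
    (hA : ∀ g : H, A (U₁ g) = U₂ g)
    (G : WithLp 2 (Y₁ × Y₂) →L[ℝ] H)
    (hG : ∀ g : H, G ((WithLp.equiv 2 (Y₁ × Y₂)).symm (U₁ g, U₂ g)) = g)
    (fi : ℕ → H)
    (W : ℕ → Submodule ℝ H)
    (hW : ∀ n : ℕ, W n = Submodule.span ℝ (fi '' Set.Iio n))
    (V : ℕ → Submodule ℝ Y₁)
    (hV : ∀ n : ℕ, V n = Submodule.span ℝ ((fun g => U₁ g) '' (fi '' Set.Iio n)))
    (P : ℕ → Y₁ →L[ℝ] Y₁)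
    (hP : ∀ n : ℕ, ∀ u : Y₁, P n u ∈ V n ∧ ∀ v ∈ V n, (inner ℝ (u - P n u) v : ℝ) = 0)
    (hdense : Dense (⋃ n : ℕ, (W n : Set H)))
    (f : H) :
    Filter.Tendsto
      (fun n : ℕ =>
        ‖f - G ((WithLp.equiv 2 (Y₁ × Y₂)).symm (U₁ f, A (P n (U₁ f))))‖)
      Filter.atTop (nhds 0) :=
  learned_reconstruction_convergence_general U₁ U₂ A hA G hG fi W hW V hV P hP hdense f
end

section
/- For every f ∈ H, the zero-extension reconstruction satisfies the error estimate ‖f − G(U₁ f, 0)‖ ≤ ‖G‖ · ‖A‖ · ‖U₁‖ · ‖f‖, where ‖G‖, ‖A‖, ‖U₁‖ denote operator norms. -/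
/-!
Since `G` inverts the full-view data map, `f = G (U₁ f, U₂ f)`, so by linearity the error of the
zero extension is `G (0, U₂ f) = G (0, A (U₁ f))`: it is the reconstruction of exactly the data
that were discarded. The zero-padded vector `(0, y)` has norm `‖y‖` in every `ℓᵖ`-product, and
the estimate is the operator-norm bound for the composite `G ∘ (0, ·) ∘ A ∘ U₁`.
-/

open WithLp
open scoped ENNReal

theorem map_toLp_sub_map_toLp_zero_right {p : ℝ≥0∞} {Y₁ Y₂ H F : Type*}
    [AddCommGroup Y₁] [AddCommGroup Y₂] [AddCommGroup H] [FunLike F (WithLp p (Y₁ × Y₂)) H]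
    [AddMonoidHomClass F (WithLp p (Y₁ × Y₂)) H] (G : F) (y₁ : Y₁) (y₂ : Y₂) :
    G (toLp p (y₁, y₂)) - G (toLp p (y₁, 0)) = G (toLp p (0, y₂)) := by
  rw [← map_sub, ← toLp_sub, Prod.mk_sub_mk, sub_self, sub_zero]

theorem norm_sub_map_toLp_zero_right_le {𝕜 : Type*} [NontriviallyNormedField 𝕜]
    {p : ℝ≥0∞} [Fact (1 ≤ p)] {H Y₁ Y₂ : Type*}
    [NormedAddCommGroup H] [NormedSpace 𝕜 H]
    [NormedAddCommGroup Y₁] [NormedSpace 𝕜 Y₁]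
    [NormedAddCommGroup Y₂] [NormedSpace 𝕜 Y₂]
    (U₁ : H →L[𝕜] Y₁) (U₂ : H →L[𝕜] Y₂) (A : Y₁ →L[𝕜] Y₂)
    (hA : ∀ g : H, A (U₁ g) = U₂ g)
    (G : WithLp p (Y₁ × Y₂) →L[𝕜] H)
    (hG : ∀ g : H, G (toLp p (U₁ g, U₂ g)) = g)
    (f : H) :
    ‖f - G (toLp p (U₁ f, 0))‖ ≤ ‖G‖ * ‖A‖ * ‖U₁‖ * ‖f‖ := by
  have error_eq : f - G (toLp p (U₁ f, 0)) = G (toLp p (0, A (U₁ f))) := by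
    rw [hA, ← map_toLp_sub_map_toLp_zero_right, hG]
  calc ‖f - G (toLp p (U₁ f, 0))‖
      ≤ ‖G‖ * ‖A (U₁ f)‖ := by
        simpa only [error_eq, norm_toLp_snd] using G.le_opNorm (toLp p (0, A (U₁ f)))
    _ ≤ ‖G‖ * (‖A‖ * (‖U₁‖ * ‖f‖)) := by
        gcongr
        exact A.le_opNorm_of_le (U₁.le_opNorm f)
    _ = ‖G‖ * ‖A‖ * ‖U₁‖ * ‖f‖ := by ring

theorem zero_extension_reconstruction_error_estimate_general
    {H Y₁ Y₂ : Type*}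
    [NormedAddCommGroup H] [InnerProductSpace ℝ H]
    [NormedAddCommGroup Y₁] [InnerProductSpace ℝ Y₁]
    [NormedAddCommGroup Y₂] [InnerProductSpace ℝ Y₂]
    (U₁ : H →L[ℝ] Y₁) (U₂ : H →L[ℝ] Y₂) (A : Y₁ →L[ℝ] Y₂)
    (hA : ∀ g : H, A (U₁ g) = U₂ g)
    (G : WithLp 2 (Y₁ × Y₂) →L[ℝ] H)
    (hG : ∀ g : H, G ((WithLp.equiv 2 (Y₁ × Y₂)).symm (U₁ g, U₂ g)) = g)
    (f : H) :
    ‖f - G ((WithLp.equiv 2 (Y₁ × Y₂)).symm (U₁ f, 0))‖ ≤ ‖G‖ * ‖A‖ * ‖U₁‖ * ‖f‖ :=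
  norm_sub_map_toLp_zero_right_le U₁ U₂ A hA G hG f

/-- Estimate (ere2z) (the case `n = 0` of Theorem 2): the reconstruction from the
zero-extended limited view data satisfies
`‖f − G (U₁ f, 0)‖ ≤ ‖G‖ ‖A‖ ‖U₁‖ ‖f‖`. -/
theorem zero_extension_reconstruction_error_estimate
    {H Y₁ Y₂ : Type*}
    [NormedAddCommGroup H] [InnerProductSpace ℝ H] [CompleteSpace H]
    [NormedAddCommGroup Y₁] [InnerProductSpace ℝ Y₁] [CompleteSpace Y₁]
    [NormedAddCommGroup Y₂] [InnerProductSpace ℝ Y₂] [CompleteSpace Y₂]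
    (U₁ : H →L[ℝ] Y₁) (U₂ : H →L[ℝ] Y₂) (A : Y₁ →L[ℝ] Y₂)
    (hA : ∀ g : H, A (U₁ g) = U₂ g)
    (G : WithLp 2 (Y₁ × Y₂) →L[ℝ] H)
    (hG : ∀ g : H, G ((WithLp.equiv 2 (Y₁ × Y₂)).symm (U₁ g, U₂ g)) = g)
    (f : H) :
    ‖f - G ((WithLp.equiv 2 (Y₁ × Y₂)).symm (U₁ f, 0))‖ ≤ ‖G‖ * ‖A‖ * ‖U₁‖ * ‖f‖ :=
  zero_extension_reconstruction_error_estimate_general U₁ U₂ A hA G hG f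
end
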